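/- rpbf is a normalization function: for every conditional statement P, rpbf(P) is an rp-basic form, and for every rp-basic form P, rpbf(P) = P. -/

import Mathlib

inductive CS (A : Type) : Type
  | tt : CS A
  | ff : CS A
  | atom : A → CS A
  | cond : CS A → CS A → CS A → CS A

namespace CS

variable {A : Type}

/-- Basic forms: the central condition is always an atom. -/
inductive IsBasic : CS A → Prop
  | tt : IsBasic tt
  | ff : IsBasic ff
  | cond {p q : CS A} (a : A) : IsBasic p → IsBasic q → IsBasic (cond p (atom a) q)

/-- Provability from the axioms CP of proposition algebra. `cond x y z` is x ◁ y ▷ z. -/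
inductive CP : CS A → CS A → Prop
  | refl (p : CS A) : CP p p
  | symm {p q} : CP p q → CP q p
  | trans {p q r} : CP p q → CP q r → CP p r
  | congr {p p' q q' r r'} :
      CP p p' → CP q q' → CP r r' → CP (.cond p q r) (.cond p' q' r')
  | cp1 (x y : CS A) : CP (.cond x .tt y) x
  | cp2 (x y : CS A) : CP (.cond x .ff y) y
  | cp3 (x : CS A) : CP (.cond .tt x .ff) x
  | cp4 (x y z u v : CS A) :
      CP (.cond x (.cond y z u) v) (.cond (.cond x y v) z (.cond x u v))

/-- Evaluation trees with leaves T, F and internal nodes labeled by atoms. -/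
inductive ET (A : Type) : Type
  | tt : ET A
  | ff : ET A
  | node : ET A → A → ET A → ET A

/-- Leaf replacement X[T↦Y, F↦Z] on evaluation trees. -/
def ET.repl : ET A → ET A → ET A → ET A
  | .tt, y, _ => y
  | .ff, _, z => z
  | .node l a r, y, z => .node (ET.repl l y z) a (ET.repl r y z)

/-- Short-circuit evaluation into evaluation trees. -/
def se : CS A → ET A
  | .tt => .tt
  | .ff => .ff
  | .atom a => .node .tt a .ff
  | .cond p q r => ET.repl (se q) (se p) (se r)

/-- Syntactic leaf replacement P[T↦Q, F↦R] on (basic) conditional statements. -/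
def srepl : CS A → CS A → CS A → CS A
  | .tt, y, _ => y
  | .ff, _, z => z
  | .atom a, _, _ => .atom a
  | .cond p c q, y, z => .cond (srepl p y z) c (srepl q y z)

/-- The basic form function. -/
def bf : CS A → CS A
  | .tt => .tt
  | .ff => .ff
  | .atom a => .cond .tt (.atom a) .ff
  | .cond p q r => srepl (bf q) (bf p) (bf r)

/-- Depth of a basic form. -/
def d : CS A → ℕ
  | .cond p _ r => 1 + max (d p) (d r)
  | _ => 0

end CS
namespace CS
variable {A : Type} [DecidableEq A]
def fA (a : A) : CS A → CS A
  | .cond p (.atom b) q => if b = a then .cond (fA a p) (.atom a) (fA a p) else .cond p (.atom b) q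
  | x => x
def gA (a : A) : CS A → CS A
  | .cond p (.atom b) q => if b = a then .cond (gA a q) (.atom a) (gA a q) else .cond p (.atom b) q
  | x => x
theorem d_fA (a : A) : ∀ p : CS A, d (fA a p) ≤ d p
  | .tt => le_refl _
  | .ff => le_refl _
  | .atom _ => le_refl _
  | .cond p .tt q => le_refl _
  | .cond p .ff q => le_refl _
  | .cond p (.atom b) q => by
      by_cases h : b = a
      · have ih := d_fA a p
        simp only [fA, h, if_true, d]
        omega
      · simp [fA, h]
  | .cond p (.cond x y z) q => le_refl _
theorem d_gA (a : A) : ∀ p : CS A, d (gA a p) ≤ d p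
  | .tt => le_refl _
  | .ff => le_refl _
  | .atom _ => le_refl _
  | .cond p .tt q => le_refl _
  | .cond p .ff q => le_refl _
  | .cond p (.atom b) q => by
      by_cases h : b = a
      · have ih := d_gA a q
        simp only [gA, h, if_true, d]
        omega
      · simp [gA, h]
  | .cond p (.cond x y z) q => le_refl _
def rpf : CS A → CS A
  | .cond p (.atom a) q => .cond (rpf (fA a p)) (.atom a) (rpf (gA a q))
  | x => x
termination_by p => d p
decreasing_by
  · have := d_fA a p; simp only [d]; omega
  · have := d_gA a q; simp only [d]; omega
end CS
namespace CS
variable {A : Type} [DecidableEq A]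

/-- Memorizing auxiliary function ℓ_a on basic forms. -/
def lA (a : A) : CS A → CS A
  | .cond p (.atom b) q => if b = a then lA a p else .cond (lA a p) (.atom b) (lA a q)
  | x => x

/-- Memorizing auxiliary function r_a on basic forms. -/
def rA (a : A) : CS A → CS A
  | .cond p (.atom b) q => if b = a then rA a q else .cond (rA a p) (.atom b) (rA a q)
  | x => x

theorem d_lA (a : A) : ∀ p : CS A, d (lA a p) ≤ d p
  | .tt => le_refl _
  | .ff => le_refl _
  | .atom _ => le_refl _
  | .cond p .tt q => le_refl _
  | .cond p .ff q => le_refl _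
  | .cond p (.atom b) q => by
      by_cases h : b = a
      · have ih := d_lA a p
        simp only [lA, h, if_true, d]
        omega
      · have ih1 := d_lA a p
        have ih2 := d_lA a q
        simp only [lA, h, if_false, d]
        omega
  | .cond p (.cond x y z) q => le_refl _

theorem d_rA (a : A) : ∀ p : CS A, d (rA a p) ≤ d p
  | .tt => le_refl _
  | .ff => le_refl _
  | .atom _ => le_refl _
  | .cond p .tt q => le_refl _
  | .cond p .ff q => le_refl _
  | .cond p (.atom b) q => by
      by_cases h : b = a
      · have ih := d_rA a q
        simp only [rA, h, if_true, d]
        omega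
      · have ih1 := d_rA a p
        have ih2 := d_rA a q
        simp only [rA, h, if_false, d]
        omega
  | .cond p (.cond x y z) q => le_refl _

/-- The function mf transforming basic forms into mem-basic forms. -/
def mf : CS A → CS A
  | .cond p (.atom a) q => .cond (mf (lA a p)) (.atom a) (mf (rA a q))
  | x => x
termination_by p => d p
decreasing_by
  · have := d_lA a p; simp only [d]; omega
  · have := d_rA a q; simp only [d]; omega

/-- Depth of an evaluation tree. -/
def ET.d : ET A → ℕ
  | .node l _ r => 1 + max (ET.d l) (ET.d r)
  | _ => 0

/-- Repetition-proof auxiliary transformation F_a on evaluation trees. -/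
def ET.FA (a : A) : ET A → ET A
  | .node l b r => if b = a then .node (ET.FA a l) a (ET.FA a l) else .node l b r
  | x => x

/-- Repetition-proof auxiliary transformation G_a on evaluation trees. -/
def ET.GA (a : A) : ET A → ET A
  | .node l b r => if b = a then .node (ET.GA a r) a (ET.GA a r) else .node l b r
  | x => x

theorem ET.d_FA (a : A) : ∀ x : ET A, ET.d (ET.FA a x) ≤ ET.d x
  | .tt => le_refl _
  | .ff => le_refl _
  | .node l b r => by
      by_cases h : b = a
      · have ih := ET.d_FA a l
        simp only [ET.FA, h, if_true, ET.d]
        omega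
      · simp [ET.FA, h]

theorem ET.d_GA (a : A) : ∀ x : ET A, ET.d (ET.GA a x) ≤ ET.d x
  | .tt => le_refl _
  | .ff => le_refl _
  | .node l b r => by
      by_cases h : b = a
      · have ih := ET.d_GA a r
        simp only [ET.GA, h, if_true, ET.d]
        omega
      · simp [ET.GA, h]

/-- The transformation rp on evaluation trees. -/
def ET.rp : ET A → ET A
  | .node l a r => .node (ET.rp (ET.FA a l)) a (ET.rp (ET.GA a r))
  | x => x
termination_by x => ET.d x
decreasing_by
  · have := ET.d_FA a l; simp only [ET.d]; omega
  · have := ET.d_GA a r; simp only [ET.d]; omega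

end CS
namespace CS
variable {A : Type}

/-- Side condition for rp-basic forms: a non-constant immediate subterm of a node
labeled `a` either has central condition different from `a`, or equal outer arguments. -/
def SideOk (a : A) : CS A → Prop
  | .tt => True
  | .ff => True
  | .cond p (.atom b) q => b ≠ a ∨ p = q
  | _ => False

/-- Rp-basic forms. -/
inductive IsRpBasic : CS A → Prop
  | tt : IsRpBasic tt
  | ff : IsRpBasic ff
  | cond {p q : CS A} (a : A) : IsRpBasic p → IsRpBasic q →
      SideOk a p → SideOk a q → IsRpBasic (cond p (atom a) q)

/-- Mem-basic forms over a subset A' of the atoms. -/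
inductive IsMemBasicOver : Set A → CS A → Prop
  | tt (A' : Set A) : IsMemBasicOver A' tt
  | ff (A' : Set A) : IsMemBasicOver A' ff
  | cond {A' : Set A} {p q : CS A} (a : A) : a ∈ A' →
      IsMemBasicOver (A' \ {a}) p → IsMemBasicOver (A' \ {a}) q →
      IsMemBasicOver A' (cond p (atom a) q)

/-- Mem-basic forms. -/
def IsMemBasic (p : CS A) : Prop := ∃ A' : Set A, IsMemBasicOver A' p

/-- Provability from CPrp: CP plus the repetition-proof axiom schemes. -/
inductive CPrp : CS A → CS A → Prop
  | refl (p : CS A) : CPrp p p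
  | symm {p q} : CPrp p q → CPrp q p
  | trans {p q r} : CPrp p q → CPrp q r → CPrp p r
  | congr {p p' q q' r r'} :
      CPrp p p' → CPrp q q' → CPrp r r' → CPrp (.cond p q r) (.cond p' q' r')
  | cp1 (x y : CS A) : CPrp (.cond x .tt y) x
  | cp2 (x y : CS A) : CPrp (.cond x .ff y) y
  | cp3 (x : CS A) : CPrp (.cond .tt x .ff) x
  | cp4 (x y z u v : CS A) :
      CPrp (.cond x (.cond y z u) v) (.cond (.cond x y v) z (.cond x u v))
  | rp1 (a : A) (x y z : CS A) :
      CPrp (.cond (.cond x (.atom a) y) (.atom a) z)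
           (.cond (.cond x (.atom a) x) (.atom a) z)
  | rp2 (a : A) (x y z : CS A) :
      CPrp (.cond x (.atom a) (.cond y (.atom a) z))
           (.cond x (.atom a) (.cond z (.atom a) z))

/-- Provability from CPmem: CP plus the memorizing axiom. -/
inductive CPmem : CS A → CS A → Prop
  | refl (p : CS A) : CPmem p p
  | symm {p q} : CPmem p q → CPmem q p
  | trans {p q r} : CPmem p q → CPmem q r → CPmem p r
  | congr {p p' q q' r r'} :
      CPmem p p' → CPmem q q' → CPmem r r' → CPmem (.cond p q r) (.cond p' q' r')
  | cp1 (x y : CS A) : CPmem (.cond x .tt y) x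
  | cp2 (x y : CS A) : CPmem (.cond x .ff y) y
  | cp3 (x : CS A) : CPmem (.cond .tt x .ff) x
  | cp4 (x y z u v : CS A) :
      CPmem (.cond x (.cond y z u) v) (.cond (.cond x y v) z (.cond x u v))
  | mem (x y z u v w : CS A) :
      CPmem (.cond x y (.cond z u (.cond v y w))) (.cond x y (.cond z u w))

end CS

/-! rpf rebuilds a node `P ◁ a ▷ Q` from `f_a(P)` and `g_a(Q)`. Since `f_a` and `g_a` are
idempotent and absorb each other, a child rebuilt in this way whose central condition is `a` has
the form `R ◁ a ▷ R`, which is the side condition of rp-basic forms. Conversely, for a child `P`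
that meets the side condition and is fixed by rpf, `rpf(f_a(P)) = P = rpf(g_a(P))`, so rpf fixes
rp-basic forms; bf fixes all basic forms. -/

namespace CS
variable {A : Type}

theorem IsBasic.srepl {p q r : CS A} (hp : IsBasic p) (hq : IsBasic q) (hr : IsBasic r) :
    IsBasic (srepl p q r) := by
  induction hp with
  | tt => exact hq
  | ff => exact hr
  | cond b _ _ ihp ihq => exact .cond b ihp ihq

theorem isBasic_bf : ∀ p : CS A, IsBasic (bf p)
  | .tt => .tt
  | .ff => .ff
  | .atom a => .cond a .tt .ff
  | .cond p q r => (isBasic_bf q).srepl (isBasic_bf p) (isBasic_bf r)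

theorem IsBasic.bf_eq {p : CS A} (h : IsBasic p) : bf p = p := by
  induction h with
  | tt => rfl
  | ff => rfl
  | cond b _ _ ihp ihq => rw [bf, ihp, ihq]; rfl

theorem IsRpBasic.isBasic {p : CS A} (h : IsRpBasic p) : IsBasic p := by
  induction h with
  | tt => exact .tt
  | ff => exact .ff
  | cond b _ _ _ _ ihp ihq => exact .cond b ihp ihq

variable [DecidableEq A]

theorem fA_fA (a : A) (p : CS A) : fA a (fA a p) = fA a p := by
  fun_induction fA a p <;> simp_all [fA]

theorem gA_fA (a : A) (p : CS A) : gA a (fA a p) = fA a p := by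
  fun_induction fA a p <;> simp_all [gA]

theorem gA_gA (a : A) (p : CS A) : gA a (gA a p) = gA a p := by
  fun_induction gA a p <;> simp_all [gA]

theorem fA_gA (a : A) (p : CS A) : fA a (gA a p) = gA a p := by
  fun_induction gA a p <;> simp_all [fA]

theorem IsBasic.fA (a : A) {p : CS A} (h : IsBasic p) : IsBasic (fA a p) := by
  induction h with
  | tt => exact .tt
  | ff => exact .ff
  | cond b hp hq ihp =>
    by_cases hb : b = a
    · subst hb; simpa [CS.fA] using .cond b ihp ihp
    · simpa [CS.fA, hb] using .cond b hp hq

theorem IsBasic.gA (a : A) {p : CS A} (h : IsBasic p) : IsBasic (gA a p) := by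
  induction h with
  | tt => exact .tt
  | ff => exact .ff
  | cond b hp hq _ ihq =>
    by_cases hb : b = a
    · subst hb; simpa [CS.gA] using .cond b ihq ihq
    · simpa [CS.gA, hb] using .cond b hp hq

theorem sideOk_rpf_fA (a : A) {p : CS A} (h : IsBasic p) : SideOk a (rpf (fA a p)) := by
  cases h with
  | tt => simp [fA, rpf, SideOk]
  | ff => simp [fA, rpf, SideOk]
  | cond b =>
    by_cases hb : b = a
    · subst hb; simp [fA, rpf, SideOk, fA_fA, gA_fA]
    · simp [fA, rpf, SideOk, hb]

theorem sideOk_rpf_gA (a : A) {p : CS A} (h : IsBasic p) : SideOk a (rpf (gA a p)) := by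
  cases h with
  | tt => simp [gA, rpf, SideOk]
  | ff => simp [gA, rpf, SideOk]
  | cond b =>
    by_cases hb : b = a
    · subst hb; simp [gA, rpf, SideOk, fA_gA, gA_gA]
    · simp [gA, rpf, SideOk, hb]

theorem IsBasic.isRpBasic_rpf {p : CS A} (h : IsBasic p) : IsRpBasic (rpf p) := by
  induction p using rpf.induct with
  | case1 p b q ihp ihq =>
    obtain _ | _ | ⟨_, hp, hq⟩ := h
    rw [rpf.eq_1]
    exact .cond b (ihp (hp.fA b)) (ihq (hq.gA b)) (sideOk_rpf_fA b hp) (sideOk_rpf_gA b hq)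
  | case2 x hx =>
    rw [rpf.eq_2 x hx]
    cases h with
    | tt => exact .tt
    | ff => exact .ff
    | cond b => exact (hx _ b _ rfl).elim

theorem rpf_fA_eq_self (a : A) {p : CS A} (h : SideOk a p) (hp : rpf p = p) :
    rpf (fA a p) = p := by
  rcases p with _ | _ | _ | ⟨x, _ | _ | b | _, y⟩ <;> simp only [SideOk] at h
  · simp [fA, rpf]
  · simp [fA, rpf]
  by_cases hb : b = a
  · obtain rfl : x = y := h.resolve_left (not_not_intro hb)
    subst hb
    rw [rpf.eq_1] at hp
    have hx : rpf (fA b x) = x := by injection hp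
    simp [fA, rpf, fA_fA, gA_fA, hx]
  · simpa [fA, hb] using hp

theorem rpf_gA_eq_self (a : A) {p : CS A} (h : SideOk a p) (hp : rpf p = p) :
    rpf (gA a p) = p := by
  rcases p with _ | _ | _ | ⟨x, _ | _ | b | _, y⟩ <;> simp only [SideOk] at h
  · simp [gA, rpf]
  · simp [gA, rpf]
  by_cases hb : b = a
  · obtain rfl : x = y := h.resolve_left (not_not_intro hb)
    subst hb
    rw [rpf.eq_1] at hp
    have hx : rpf (gA b x) = x := by injection hp
    simp [gA, rpf, fA_gA, gA_gA, hx]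
  · simpa [gA, hb] using hp

theorem IsRpBasic.rpf_eq {p : CS A} (h : IsRpBasic p) : rpf p = p := by
  induction h with
  | tt => simp [rpf]
  | ff => simp [rpf]
  | cond b _ _ sp sq ihp ihq => rw [rpf.eq_1, rpf_fA_eq_self b sp ihp, rpf_gA_eq_self b sq ihq]

end CS

theorem stmt12 {A : Type} [DecidableEq A] :
    (∀ P : CS A, CS.IsRpBasic (CS.rpf (CS.bf P))) ∧
    (∀ P : CS A, CS.IsRpBasic P → CS.rpf (CS.bf P) = P) :=
  ⟨fun P => (CS.isBasic_bf P).isRpBasic_rpf,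
   fun _ h => by rw [h.isBasic.bf_eq, h.rpf_eq]⟩
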